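/- Let ω ⊂ ℝ^j be a bounded strictly convex domain with j ≤ N, let ψ be the infimum over the family ℱ of concave quadratics positive on ω, set C = ω × ℝ^{N−j} and define Ψ on closure(C) = closure(ω) × ℝ^{N−j} by Ψ(x) = ψ(x₁,…,x_j). Let k be an integer with N − j < k ≤ N. Then Ψ is continuous on closure(C) and Ψ is a viscosity supersolution of 𝒫ₖ⁺(D²Ψ) = −1 in ω × ℝ^{N−j} (i.e. 𝒫ₖ⁺(D²Ψ) ≤ −1 in the viscosity sense). -/

import Mathlib

noncomputable section

open Metric Set Filter Bornology
open scoped RealInnerProductSpace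

/-- `ℝ^N` with the Euclidean structure. -/
abbrev Euc (N : ℕ) := EuclideanSpace ℝ (Fin N)

/-- The sum of the `k` largest values (with multiplicity) of `v : Fin N → ℝ`. -/
def sumTopK (N k : ℕ) (v : Fin N → ℝ) : ℝ :=
  sSup {t : ℝ | ∃ s : Finset (Fin N), s.card = k ∧ t = ∑ i ∈ s, v i}

/-- The sum of the `k` smallest values (with multiplicity) of `v : Fin N → ℝ`. -/
def sumBotK (N k : ℕ) (v : Fin N → ℝ) : ℝ :=
  sInf {t : ℝ | ∃ s : Finset (Fin N), s.card = k ∧ t = ∑ i ∈ s, v i}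

/-- `𝒫ₖ⁺(X)`: the sum of the `k` largest eigenvalues of the symmetric matrix `X`. -/
def Pkp (N k : ℕ) (X : Matrix (Fin N) (Fin N) ℝ) : ℝ :=
  if h : X.IsHermitian then sumTopK N k h.eigenvalues else 0

/-- `𝒫ₖ⁻(X)`: the sum of the `k` smallest eigenvalues of the symmetric matrix `X`. -/
def Pkm (N k : ℕ) (X : Matrix (Fin N) (Fin N) ℝ) : ℝ :=
  if h : X.IsHermitian then sumBotK N k h.eigenvalues else 0

/-- The Hessian matrix of `φ : ℝ^N → ℝ` at `x`. -/
def hess {N : ℕ} (φ : Euc N → ℝ) (x : Euc N) : Matrix (Fin N) (Fin N) ℝ :=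
  fun i j => iteratedFDeriv ℝ 2 φ x ![EuclideanSpace.single i 1, EuclideanSpace.single j 1]

/-- `u` is a viscosity supersolution of `G(x, u(x), Du, D²u) = 0` in the open set `Ω`,
where the sign convention is that supersolutions satisfy `G ≤ 0` (degenerate
ellipticity in the second-order slot being monotone increasing). -/
def SuperSol {N : ℕ} (Ω : Set (Euc N))
    (G : Euc N → ℝ → Euc N → Matrix (Fin N) (Fin N) ℝ → ℝ) (u : Euc N → ℝ) : Prop :=
  ∀ x₀ ∈ Ω, ∀ φ : Euc N → ℝ, ContDiffAt ℝ 2 φ x₀ →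
    IsLocalMinOn (fun x => u x - φ x) Ω x₀ →
    G x₀ (u x₀) (gradient φ x₀) (hess φ x₀) ≤ 0

/-- `u` is a viscosity subsolution of `G(x, u(x), Du, D²u) = 0` in the open set `Ω`. -/
def SubSol {N : ℕ} (Ω : Set (Euc N))
    (G : Euc N → ℝ → Euc N → Matrix (Fin N) (Fin N) ℝ → ℝ) (u : Euc N → ℝ) : Prop :=
  ∀ x₀ ∈ Ω, ∀ φ : Euc N → ℝ, ContDiffAt ℝ 2 φ x₀ →
    IsLocalMaxOn (fun x => u x - φ x) Ω x₀ →
    0 ≤ G x₀ (u x₀) (gradient φ x₀) (hess φ x₀)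

/-- A set `s` is strictly convex in the sense of the paper:
`(1-t)x + ty ∈ s` for all distinct `x, y ∈ closure s` and `0 < t < 1`. -/
def StrictlyConvexSet {E : Type*} [NormedAddCommGroup E] [NormedSpace ℝ E] (s : Set E) : Prop :=
  ∀ x ∈ closure s, ∀ y ∈ closure s, x ≠ y → ∀ t : ℝ, 0 < t → t < 1 → (1 - t) • x + t • y ∈ s

/-- `C ⊆ ℝ^N` is a cylinder of class `C_j`: `C = ω × ℝ^{N-j}` with `ω ⊆ ℝ^j` a bounded
strictly convex open set. -/
def IsCylinder (N j : ℕ) (C : Set (Euc N)) : Prop :=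
  ∃ (hj : j ≤ N) (ω : Set (EuclideanSpace ℝ (Fin j))),
    IsOpen ω ∧ IsBounded ω ∧ ω.Nonempty ∧ StrictlyConvexSet ω ∧
    C = {x : Euc N | (WithLp.toLp 2 (fun i : Fin j => x (Fin.castLE hj i)) : EuclideanSpace ℝ (Fin j)) ∈ ω}

/-- `Ω` belongs to the class `𝒞_j`: for every boundary point `x` there are an orthogonal
transformation `O` and a cylinder `C ∈ C_j` with `Ω ⊆ OC` and `x ∈ ∂(OC)`. -/
def MemCclass (N j : ℕ) (Ω : Set (Euc N)) : Prop :=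
  ∀ x ∈ frontier Ω, ∃ (O : Euc N ≃ₗᵢ[ℝ] Euc N) (C : Set (Euc N)),
    IsCylinder N j C ∧ Ω ⊆ (⇑O) '' C ∧ x ∈ frontier ((⇑O) '' C)

/-- `d(Ω)`: the largest dimension of a flat piece of the boundary of `Ω`. -/
def flatDim (N : ℕ) (Ω : Set (Euc N)) : ℕ :=
  sSup {m : ℕ | ∃ x ∈ frontier Ω, ∃ V : Submodule ℝ (Euc N), Module.finrank ℝ V = m ∧
    ∃ δ : ℝ, 0 < δ ∧ (fun v => x + v) '' ((V : Set (Euc N)) ∩ ball 0 δ) ⊆ frontier Ω}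

/-- The generalized principal eigenvalue `μₖ⁺` for `𝒫ₖ⁺(D²·) + b |D·|` on `Ω`. -/
def mukplus (N k : ℕ) (b : ℝ) (Ω : Set (Euc N)) : ℝ :=
  sSup {μ : ℝ | ∃ φ : Euc N → ℝ, LowerSemicontinuousOn φ Ω ∧ (∀ x ∈ Ω, 0 < φ x) ∧
    SuperSol Ω (fun _ r p X => Pkp N k X + b * ‖p‖ + μ * r) φ}

/-- `g` is locally Lipschitz in the open set `Ω`. -/
def LocLipOn {N : ℕ} (Ω : Set (Euc N)) (g : Euc N → ℝ) : Prop :=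
  ∀ x ∈ Ω, ∃ (K : NNReal) (ε : ℝ), 0 < ε ∧ ball x ε ⊆ Ω ∧ LipschitzOnWith K g (ball x ε)

/-- The function `ψ`: the infimum over the family `ℱ` of concave quadratics
`f(x) = (R² - |x - x₀|²)/2` which are positive on `ω`. -/
def psiF {j : ℕ} (ω : Set (EuclideanSpace ℝ (Fin j))) (x : EuclideanSpace ℝ (Fin j)) : ℝ :=
  sInf {t : ℝ | ∃ (R : ℝ) (x₀ : EuclideanSpace ℝ (Fin j)), 0 < R ∧
    (∀ y ∈ ω, 0 < (R ^ 2 - ‖y - x₀‖ ^ 2) / 2) ∧ t = (R ^ 2 - ‖x - x₀‖ ^ 2) / 2}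

/-!
Every admissible quadratic `q` makes `q + ‖x‖²/2` affine, so `ψ + ‖x‖²/2` is concave and
`ψ (a + w) + ψ (a - w) ≤ 2 ψ a - ‖w‖²`. Concavity gives continuity inside `ω`. A boundary point
`z` of the strictly convex `ω` is exposed, so quadratics centred far out along the outer normal
at `z` are admissible and arbitrarily small at `z`; hence `ψ z = 0` and `ψ` is continuous there.

A `C²` test function touching `Ψ = ψ ∘ π` from below inherits the second-difference bound, so
`D²φ (v, v) ≤ -‖π v‖²`. Summing over an orthonormal eigenbasis, the eigenvectors carry total
`π`-mass `j`, at most `N - k` of it outside any `k` of them, so `𝒫ₖ⁺(D²φ) ≤ N - k - j ≤ -1`.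
-/

section ConcaveQuad

variable {E : Type*} [NormedAddCommGroup E]

def concaveQuad (R : ℝ) (c x : E) : ℝ := (R ^ 2 - ‖x - c‖ ^ 2) / 2

/-- `concaveQuad R c` belongs to the family `ℱ` of the paper. -/
def IsAdmissibleQuad (ω : Set E) (R : ℝ) (c : E) : Prop :=
  0 < R ∧ ∀ y ∈ ω, 0 < concaveQuad R c y

theorem continuous_concaveQuad (R : ℝ) (c : E) : Continuous (concaveQuad R c) := by
  unfold concaveQuad
  fun_prop

variable {ω : Set E} {R : ℝ} {c x : E}

theorem IsAdmissibleQuad.nonneg_of_mem_closure (h : IsAdmissibleQuad ω R c)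
    (hx : x ∈ closure ω) : 0 ≤ concaveQuad R c x :=
  closure_minimal (fun y hy => (h.2 y hy).le)
    (isClosed_le continuous_const (continuous_concaveQuad R c)) hx

theorem exists_isAdmissibleQuad (hω : IsBounded ω) : ∃ R c, IsAdmissibleQuad ω R c := by
  obtain ⟨r, hr⟩ := hω.subset_ball 0
  refine ⟨max r 1, 0, by positivity, fun y hy => ?_⟩
  have hy : ‖y - 0‖ < max r 1 := by
    simpa using (mem_ball_zero_iff.1 (hr hy)).trans_le (le_max_left r 1)
  have := pow_lt_pow_left₀ hy (norm_nonneg _) two_ne_zero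
  unfold concaveQuad
  linarith

variable [InnerProductSpace ℝ E]

theorem concaveQuad_add_half_norm_sq (R : ℝ) (c x : E) :
    concaveQuad R c x + ‖x‖ ^ 2 / 2 = (R ^ 2 - ‖c‖ ^ 2) / 2 + ⟪x, c⟫ := by
  rw [concaveQuad, norm_sub_sq_real]
  ring

theorem concaveQuad_add_add_sub (R : ℝ) (c a w : E) :
    concaveQuad R c (a + w) + concaveQuad R c (a - w) = 2 * concaveQuad R c a - ‖w‖ ^ 2 := by
  simp only [concaveQuad, add_sub_right_comm a w c, sub_right_comm a w c, norm_add_sq_real,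
    norm_sub_sq_real]
  ring

end ConcaveQuad

section StrictlyConvex

variable {E : Type*} [NormedAddCommGroup E]

theorem StrictlyConvexSet.convex [NormedSpace ℝ E] {s : Set E} (hs : StrictlyConvexSet s) :
    Convex ℝ s := by
  refine convex_iff_forall_pos.2 fun x hx y hy a b ha hb hab => ?_
  obtain rfl | hxy := eq_or_ne x y
  · rwa [Convex.combo_self hab]
  obtain rfl : a = 1 - b := by linarith
  exact hs x (subset_closure hx) y (subset_closure hy) hxy b hb (by linarith)

variable [InnerProductSpace ℝ E] [CompleteSpace E] {ω : Set E} {z : E}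

theorem StrictlyConvexSet.exists_inner_lt (hωo : IsOpen ω) (hωsc : StrictlyConvexSet ω)
    (hz : z ∈ closure ω) (hzω : z ∉ ω) :
    ∃ e : E, ∀ y ∈ closure ω, y ≠ z → ⟪e, y⟫ < ⟪e, z⟫ := by
  obtain ⟨f, hf⟩ := geometric_hahn_banach_open_point hωsc.convex hωo hzω
  refine ⟨(InnerProductSpace.toDual ℝ E).symm f, fun y hy hyz => ?_⟩
  simp only [InnerProductSpace.toDual_symm_apply]
  have hmid := hf _ (hωsc z hz y hy hyz.symm (1 / 2) (by norm_num) (by norm_num))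
  simp only [map_add, map_smul, smul_eq_mul] at hmid
  linarith

theorem exists_isAdmissibleQuad_concaveQuad_lt [ProperSpace E] (hωo : IsOpen ω)
    (hωb : IsBounded ω) (hωsc : StrictlyConvexSet ω) (hz : z ∈ closure ω) (hzω : z ∉ ω)
    {ε : ℝ} (hε : 0 < ε) : ∃ R c, IsAdmissibleQuad ω R c ∧ concaveQuad R c z < ε := by
  obtain ⟨e, he⟩ := hωsc.exists_inner_lt hωo hz hzω
  obtain ⟨r, hr⟩ := hωb.subset_closedBall z
  have hK : IsCompact (closure ω ∩ {y | ε ≤ ‖y - z‖ ^ 2}) :=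
    hωb.isCompact_closure.inter_right (isClosed_le continuous_const (by fun_prop))
  obtain ⟨δ, hδ, hgap⟩ := hK.exists_forall_le' (f := fun y => ⟪e, z - y⟫) (a := 0)
    (by fun_prop) fun y ⟨hy, hyε⟩ => by
      have hyz : y ≠ z := by rintro rfl; simp [hε.not_ge] at hyε
      simpa [inner_sub_right] using he y hy hyz
  -- Centre the quadratic far behind the supporting hyperplane, on the normal through `z`.
  set s := (r ^ 2 + 1) / (2 * δ)
  have hs : 0 < s := by positivity
  have hRsq : 0 < s ^ 2 * ‖e‖ ^ 2 + ε := by positivity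
  have hdist : ∀ y, ‖y - (z - s • e)‖ ^ 2 = ‖y - z‖ ^ 2 - 2 * s * ⟪e, z - y⟫ + s ^ 2 * ‖e‖ ^ 2 := by
    intro y
    rw [sub_sub_eq_add_sub, add_sub_right_comm, norm_add_sq_real, norm_smul, real_inner_smul_right,
      real_inner_comm, ← neg_sub z y, inner_neg_right, Real.norm_eq_abs, mul_pow, sq_abs]
    ring
  refine ⟨√(s ^ 2 * ‖e‖ ^ 2 + ε), z - s • e, ⟨Real.sqrt_pos.2 hRsq, fun y hy => ?_⟩, ?_⟩
  all_goals rw [concaveQuad, Real.sq_sqrt hRsq.le, hdist]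
  · have hyz : 0 < ⟪e, z - y⟫ := by
      simpa [inner_sub_right] using he y (subset_closure hy) (ne_of_mem_of_not_mem hy hzω)
    rcases lt_or_ge (‖y - z‖ ^ 2) ε with hnear | hfar
    · nlinarith
    · have hδy := hgap y ⟨subset_closure hy, hfar⟩
      have hry : ‖y - z‖ ^ 2 ≤ r ^ 2 :=
        pow_le_pow_left₀ (norm_nonneg _) (by simpa [dist_eq_norm] using hr hy) 2
      have : 2 * s * δ = r ^ 2 + 1 := by simp only [s]; field_simp
      nlinarith
  · simpa using hε

end StrictlyConvex

section Psi

variable {j : ℕ} {ω : Set (EuclideanSpace ℝ (Fin j))} {R : ℝ}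
  {c x z : EuclideanSpace ℝ (Fin j)}

theorem psiF_le (h : IsAdmissibleQuad ω R c) (hx : x ∈ closure ω) :
    psiF ω x ≤ concaveQuad R c x := by
  refine csInf_le ⟨0, ?_⟩ ⟨R, c, h.1, h.2, rfl⟩
  rintro t ⟨R', c', hR', hpos, rfl⟩
  exact IsAdmissibleQuad.nonneg_of_mem_closure ⟨hR', hpos⟩ hx

theorem le_psiF (hω : IsBounded ω) {a : ℝ}
    (h : ∀ R c, IsAdmissibleQuad ω R c → a ≤ concaveQuad R c x) : a ≤ psiF ω x := by
  obtain ⟨R, c, hRc⟩ := exists_isAdmissibleQuad hω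
  refine le_csInf ⟨_, R, c, hRc.1, hRc.2, rfl⟩ ?_
  rintro t ⟨R, c, hR, hpos, rfl⟩
  exact h R c ⟨hR, hpos⟩

theorem psiF_nonneg (hω : IsBounded ω) (hx : x ∈ closure ω) : 0 ≤ psiF ω x :=
  le_psiF hω fun _ _ h => h.nonneg_of_mem_closure hx

theorem psiF_add_add_sub_le (hω : IsBounded ω) {a w : EuclideanSpace ℝ (Fin j)}
    (hp : a + w ∈ closure ω) (hm : a - w ∈ closure ω) :
    psiF ω (a + w) + psiF ω (a - w) ≤ 2 * psiF ω a - ‖w‖ ^ 2 := by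
  have := le_psiF hω (x := a) (a := (psiF ω (a + w) + psiF ω (a - w) + ‖w‖ ^ 2) / 2)
    fun R c h => by
      linarith [psiF_le h hp, psiF_le h hm, concaveQuad_add_add_sub R c a w]
  linarith

theorem concaveOn_psiF_add_half_norm_sq (hω : IsBounded ω) (hconv : Convex ℝ (closure ω)) :
    ConcaveOn ℝ (closure ω) fun x => psiF ω x + ‖x‖ ^ 2 / 2 := by
  refine ⟨hconv, fun x hx y hy a b ha hb hab => ?_⟩
  simp only [smul_eq_mul, ← sub_le_iff_le_add]
  refine le_psiF hω fun R c h => ?_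
  have hxy := concaveQuad_add_half_norm_sq R c (a • x + b • y)
  rw [inner_add_left, real_inner_smul_left, real_inner_smul_left] at hxy
  have hx' := concaveQuad_add_half_norm_sq R c x
  have hy' := concaveQuad_add_half_norm_sq R c y
  have hpx := mul_le_mul_of_nonneg_left (psiF_le h hx) ha
  have hpy := mul_le_mul_of_nonneg_left (psiF_le h hy) hb
  obtain rfl : a = 1 - b := by linarith
  linear_combination hpx + hpy + (1 - b) * hx' + b * hy' - hxy

theorem psiF_eq_zero_of_notMem (hωo : IsOpen ω) (hωb : IsBounded ω)
    (hωsc : StrictlyConvexSet ω) (hz : z ∈ closure ω) (hzω : z ∉ ω) : psiF ω z = 0 := by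
  refine le_antisymm (le_of_forall_pos_le_add fun ε hε => ?_) (psiF_nonneg hωb hz)
  obtain ⟨R, c, h, hlt⟩ := exists_isAdmissibleQuad_concaveQuad_lt hωo hωb hωsc hz hzω hε
  linarith [psiF_le h hz]

theorem continuousOn_psiF (hωo : IsOpen ω) (hωb : IsBounded ω) (hωsc : StrictlyConvexSet ω) :
    ContinuousOn (psiF ω) (closure ω) := by
  intro z hz
  by_cases hzω : z ∈ ω
  · have hconc := (concaveOn_psiF_add_half_norm_sq hωb hωsc.convex.closure).subset
      subset_closure hωsc.convex
    have hcont := (hconc.continuousOn hωo).continuousAt (hωo.mem_nhds hzω)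
    have := hcont.sub (by fun_prop : ContinuousAt (fun x => ‖x‖ ^ 2 / 2) z)
    exact (this.congr (.of_forall fun x => by simp)).continuousWithinAt
  · rw [ContinuousWithinAt, psiF_eq_zero_of_notMem hωo hωb hωsc hz hzω]
    refine tendsto_order.2 ⟨fun a ha => ?_, fun a ha => ?_⟩
    · filter_upwards [self_mem_nhdsWithin] with x hx
      exact ha.trans_le (psiF_nonneg hωb hx)
    · obtain ⟨R, c, h, hlt⟩ := exists_isAdmissibleQuad_concaveQuad_lt hωo hωb hωsc hz hzω ha
      filter_upwards [self_mem_nhdsWithin,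
        nhdsWithin_le_nhds ((continuous_concaveQuad R c).continuousAt.eventually_lt
          continuousAt_const hlt)] with x hx hxa
      exact (psiF_le h hx).trans_lt hxa

end Psi

section SecondDifference

open Asymptotics Topology

theorem le_of_le_mul_sq_of_isLittleO {F : ℝ → ℝ} {a b : ℝ}
    (hF : ∀ᶠ t in 𝓝[>] 0, F t ≤ a * t ^ 2)
    (ho : (fun t => F t - t ^ 2 * b) =o[𝓝[>] 0] fun t => t ^ 2) : b ≤ a := by
  by_contra! hab
  obtain ⟨t, hFt, hot, ht⟩ := (hF.and ((ho.def (half_pos (sub_pos.2 hab))).and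
    self_mem_nhdsWithin)).exists
  rw [Real.norm_eq_abs, norm_pow, Real.norm_eq_abs, sq_abs] at hot
  have ht2 : 0 < t ^ 2 := pow_pos ht 2
  nlinarith [neg_abs_le (F t - t ^ 2 * b)]

variable {E : Type*} [NormedAddCommGroup E] [NormedSpace ℝ E] {f : E → ℝ}

theorem Convex.isLittleO_secondDifference {s : Set E} (hs : Convex ℝ s) {f' : E → E →L[ℝ] ℝ}
    {f'' : E →L[ℝ] E →L[ℝ] ℝ} (hf : ∀ y ∈ interior s, HasFDerivAt f (f' y) y) {x v : E}
    (hx : x ∈ interior s) (hf' : HasFDerivWithinAt f' f'' (interior s) x)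
    (hvp : x + v ∈ interior s) (hvm : x - v ∈ interior s) :
    (fun t : ℝ => f (x + t • v) + f (x - t • v) - 2 * f x - t ^ 2 * f'' v v)
      =o[𝓝[>] 0] fun t => t ^ 2 := by
  have taylor (w : E) (hw : x + w ∈ interior s) :=
    hs.taylor_approx_two_segment hf (interior_subset hx) hf' (v := 0) (w := w)
      (by simpa using hx) (by simpa using hw)
  refine ((taylor v hvp).add (taylor (-v) (by simpa [← sub_eq_add_neg] using hvm))).congr_left
    fun t => ?_
  simp only [smul_zero, add_zero, smul_neg, ← sub_eq_add_neg, map_neg, smul_eq_mul,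
    zero_apply, neg_apply, neg_neg, map_zero]
  ring

theorem ContDiffAt.fderiv_fderiv_apply_le {x v : E} {a : ℝ} (hf : ContDiffAt ℝ 2 f x)
    (h : ∀ᶠ t in 𝓝[>] 0, f (x + t • v) + f (x - t • v) - 2 * f x ≤ a * t ^ 2) :
    fderiv ℝ (fderiv ℝ f) x v v ≤ a := by
  obtain ⟨u, hu, hfu⟩ := hf.contDiffOn le_rfl (by simp)
  obtain ⟨r, hr, hru⟩ := Metric.mem_nhds_iff.1 hu
  have hdiff : ∀ y ∈ interior (ball x r), HasFDerivAt f (fderiv ℝ f y) y := fun y hy => by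
    rw [interior_eq_iff_isOpen.2 isOpen_ball] at hy
    exact ((hfu.differentiableOn two_ne_zero y (hru hy)).differentiableAt
      (Filter.mem_of_superset (isOpen_ball.mem_nhds hy) hru)).hasFDerivAt
  have hf' : HasFDerivWithinAt (fderiv ℝ f) (fderiv ℝ (fderiv ℝ f) x) (interior (ball x r)) x :=
    ((hf.fderiv_right (m := 1) le_rfl).differentiableAt one_ne_zero).hasFDerivAt.hasFDerivWithinAt
  -- Only short increments stay in the ball, so apply the expansion to `c • v` and rescale.
  set c := r / (2 * (‖v‖ + 1))
  have hc : 0 < c := by positivity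
  have hcv : ‖c • v‖ < r := by
    rw [norm_smul, Real.norm_of_nonneg hc.le, div_mul_eq_mul_div, div_lt_iff₀ (by positivity)]
    nlinarith [norm_nonneg v]
  have hmem (w : E) (hw : ‖w‖ < r) : x + w ∈ interior (ball x r) := by
    rwa [interior_eq_iff_isOpen.2 isOpen_ball, mem_ball, dist_self_add_left]
  have ho := (convex_ball x r).isLittleO_secondDifference hdiff
    (by simpa using hmem 0 (by simpa)) hf' (hmem _ hcv)
    (by simpa [sub_eq_add_neg] using hmem (-(c • v)) (by simpa using hcv))
  have hscaled : ∀ᶠ t in 𝓝[>] 0, f (x + t • c • v) + f (x - t • c • v) - 2 * f x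
      ≤ (a * c ^ 2) * t ^ 2 := by
    filter_upwards [eventually_nhdsGT_zero_mul_left hc h] with t ht
    rw [smul_smul, mul_comm t c]
    linarith [show a * (c * t) ^ 2 = a * c ^ 2 * t ^ 2 by ring]
  have := le_of_le_mul_sq_of_isLittleO hscaled ho
  simp only [map_smul, smul_apply, smul_eq_mul] at this
  nlinarith [pow_pos hc 2]

end SecondDifference

section Viscosity

open Topology

variable {E : Type*} [NormedAddCommGroup E] [NormedSpace ℝ E]

theorem fderiv_fderiv_apply_le_of_isLocalMin_sub {u φ : E → ℝ} {x₀ v : E} {a : ℝ}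
    (hφ : ContDiffAt ℝ 2 φ x₀) (hmin : IsLocalMin (fun x => u x - φ x) x₀)
    (hu : ∀ᶠ t in 𝓝[>] 0, u (x₀ + t • v) + u (x₀ - t • v) - 2 * u x₀ ≤ a * t ^ 2) :
    fderiv ℝ (fderiv ℝ φ) x₀ v v ≤ a := by
  have hline (w : E) : Tendsto (fun t : ℝ => x₀ + t • w) (𝓝[>] 0) (𝓝 x₀) :=
    ((by fun_prop : Continuous fun t : ℝ => x₀ + t • w).tendsto' 0 x₀ (by simp)).mono_left
      nhdsWithin_le_nhds
  refine hφ.fderiv_fderiv_apply_le ?_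
  filter_upwards [hu, hline v hmin, hline (-v) hmin] with t ht hp hm
  simp only [mem_preimage, mem_ofPred_eq, smul_neg, ← sub_eq_add_neg] at hp hm
  linarith

theorem psiF_comp_secondDifference_le {j : ℕ} {ω : Set (EuclideanSpace ℝ (Fin j))}
    (hωo : IsOpen ω) (hωb : IsBounded ω) (L : E →L[ℝ] EuclideanSpace ℝ (Fin j)) {x₀ : E}
    (hx₀ : L x₀ ∈ ω) (v : E) :
    ∀ᶠ t in 𝓝[>] 0, psiF ω (L (x₀ + t • v)) + psiF ω (L (x₀ - t • v)) - 2 * psiF ω (L x₀)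
      ≤ -‖L v‖ ^ 2 * t ^ 2 := by
  have hline (w : E) : ∀ᶠ t : ℝ in 𝓝[>] 0, L (x₀ + t • w) ∈ ω := by
    exact (((by fun_prop : Continuous fun t : ℝ => L (x₀ + t • w)).tendsto' 0 (L x₀)
      (by simp)).mono_left nhdsWithin_le_nhds) (hωo.mem_nhds hx₀)
  filter_upwards [hline v, hline (-v)] with t hp hm
  simp only [smul_neg, ← sub_eq_add_neg, map_add, map_sub, map_smul] at hp hm ⊢
  have := psiF_add_add_sub_le hωb (subset_closure hp) (subset_closure hm)
  rw [norm_smul, mul_pow, Real.norm_eq_abs, sq_abs] at this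
  linarith

end Viscosity

section Hessian

open Matrix

variable {N : ℕ}

theorem hess_isHermitian {φ : Euc N → ℝ} {x : Euc N} (hφ : ContDiffAt ℝ 2 φ x) :
    (hess φ x).IsHermitian := by
  ext i l
  exact (hφ.isSymmSndFDerivAt (by simp)).iteratedFDeriv_cons

theorem dotProduct_hess_mulVec (φ : Euc N → ℝ) (x u : Euc N) :
    ⇑u ⬝ᵥ hess φ x *ᵥ ⇑u = fderiv ℝ (fderiv ℝ φ) x u u := by
  set b := (EuclideanSpace.basisFun (Fin N) ℝ).toBasis
  have h := apply_eq_dotProduct_toMatrix₂_mulVec b b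
    ((ContinuousLinearMap.coeLM ℝ).comp (fderiv ℝ (fderiv ℝ φ) x : Euc N →ₗ[ℝ] Euc N →L[ℝ] ℝ)) u u
  have hb : ⇑(RingHom.id ℝ) ∘ ⇑(b.repr u) = ⇑u := by ext; simp [b]
  have hM : LinearMap.toMatrix₂ b b ((ContinuousLinearMap.coeLM ℝ).comp
      (fderiv ℝ (fderiv ℝ φ) x : Euc N →ₗ[ℝ] Euc N →L[ℝ] ℝ)) = hess φ x := by
    ext i l
    simp [b, hess, iteratedFDeriv_two_apply, LinearMap.toMatrix₂_apply]
  rw [show fderiv ℝ (fderiv ℝ φ) x u u = _ from h, hb, hM]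

end Hessian

section TopEigenvalues

open Matrix

variable {N k : ℕ}

theorem sumTopK_le {v : Fin N → ℝ} {c : ℝ} (hkN : k ≤ N)
    (h : ∀ s : Finset (Fin N), s.card = k → ∑ i ∈ s, v i ≤ c) : sumTopK N k v ≤ c := by
  obtain ⟨s, -, hs⟩ :=
    Finset.exists_subset_card_eq (s := (Finset.univ : Finset (Fin N))) (by simpa using hkN)
  refine csSup_le ⟨_, s, hs, rfl⟩ ?_
  rintro t ⟨s, hs, rfl⟩
  exact h s hs

theorem OrthonormalBasis.sum_sq_apply (b : OrthonormalBasis (Fin N) ℝ (EuclideanSpace ℝ (Fin N)))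
    (l : Fin N) : ∑ i, b i l ^ 2 = 1 := by
  simpa [EuclideanSpace.inner_single_right] using b.sum_sq_inner_right (EuclideanSpace.single l 1)

theorem Pkp_le_of_dotProduct_mulVec_le {M : Matrix (Fin N) (Fin N) ℝ} (hM : M.IsHermitian)
    (hkN : k ≤ N) (S : Finset (Fin N))
    (hQ : ∀ u : EuclideanSpace ℝ (Fin N), ⇑u ⬝ᵥ M *ᵥ ⇑u ≤ -∑ l ∈ S, u l ^ 2) :
    Pkp N k M ≤ N - k - S.card := by
  rw [Pkp, dif_pos hM]
  set b := hM.eigenvectorBasis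
  set P : Fin N → ℝ := fun i => ∑ l ∈ S, b i l ^ 2
  have heig (i : Fin N) : hM.eigenvalues i ≤ -P i := by
    simpa [hM.eigenvalues_eq] using hQ (b i)
  have hP_le_one (i : Fin N) : P i ≤ 1 := by
    calc P i ≤ ∑ l, b i l ^ 2 :=
          Finset.sum_le_sum_of_subset_of_nonneg S.subset_univ fun _ _ _ => sq_nonneg _
      _ = 1 := by rw [← EuclideanSpace.real_norm_sq_eq, b.orthonormal.1 i, one_pow]
  have hP_sum : ∑ i, P i = S.card := by
    rw [Finset.sum_comm, Finset.sum_congr rfl fun l _ => b.sum_sq_apply l]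
    simp
  refine sumTopK_le hkN fun s hs => ?_
  have hout : ∑ i ∈ sᶜ, P i ≤ N - k := by
    calc ∑ i ∈ sᶜ, P i ≤ ∑ i ∈ sᶜ, 1 := Finset.sum_le_sum fun i _ => hP_le_one i
      _ = N - k := by simp [Finset.card_compl, hs, Nat.cast_sub hkN]
  have := Finset.sum_add_sum_compl s P
  linarith [Finset.sum_le_sum fun i (_ : i ∈ s) => heig i, Finset.sum_neg_distrib (s := s) (f := P)]

end TopEigenvalues

def truncate {N j : ℕ} (hj : j ≤ N) : Euc N →L[ℝ] EuclideanSpace ℝ (Fin j) :=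
  LinearMap.toContinuousLinearMap
    { toFun := fun x => WithLp.toLp 2 fun i => x (Fin.castLE hj i)
      map_add' := fun _ _ => rfl
      map_smul' := fun _ _ => rfl }

theorem norm_truncate_sq {N j : ℕ} (hj : j ≤ N) (u : Euc N) :
    ‖truncate hj u‖ ^ 2 = ∑ l ∈ Finset.univ.map (Fin.castLEEmb hj), u l ^ 2 := by
  rw [EuclideanSpace.real_norm_sq_eq, Finset.sum_map]
  rfl

theorem cylinder_supersolution_general {N j k : ℕ} (hj : j ≤ N)
    (hjk : N - j < k) (hkN : k ≤ N)
    (ω : Set (EuclideanSpace ℝ (Fin j))) (hωo : IsOpen ω) (hωb : IsBounded ω)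
    (hωsc : StrictlyConvexSet ω)
    (C : Set (Euc N))
    (hC : C = {x : Euc N | (WithLp.toLp 2 (fun i : Fin j => x (Fin.castLE hj i)) : EuclideanSpace ℝ (Fin j)) ∈ ω})
    (Ψ : Euc N → ℝ)
    (hΨ : Ψ = fun x : Euc N => psiF ω (WithLp.toLp 2 (fun i : Fin j => x (Fin.castLE hj i)))) :
    ContinuousOn Ψ (closure C) ∧ SuperSol C (fun _ _ _ X => Pkp N k X + 1) Ψ := by
  obtain rfl : C = truncate hj ⁻¹' ω := hC
  obtain rfl : Ψ = psiF ω ∘ truncate hj := hΨ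
  refine ⟨(continuousOn_psiF hωo hωb hωsc).comp (truncate hj).continuous.continuousOn
    ((truncate hj).continuous.closure_preimage_subset ω), fun x₀ hx₀ φ hφ hmin => ?_⟩
  have hD2 (v : Euc N) : fderiv ℝ (fderiv ℝ φ) x₀ v v ≤ -‖truncate hj v‖ ^ 2 := by
    simpa using fderiv_fderiv_apply_le_of_isLocalMin_sub hφ
      (hmin.isLocalMin ((hωo.preimage (truncate hj).continuous).mem_nhds hx₀))
      (psiF_comp_secondDifference_le hωo hωb (truncate hj) hx₀ v)
  have hPkp := Pkp_le_of_dotProduct_mulVec_le (hess_isHermitian hφ) hkN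
    (Finset.univ.map (Fin.castLEEmb hj)) fun u => by
      rw [dotProduct_hess_mulVec, ← norm_truncate_sq hj]
      exact hD2 u
  simp only [Finset.card_map, Finset.card_univ, Fintype.card_fin] at hPkp
  have hNkj : (N : ℝ) + 1 ≤ k + j := by exact_mod_cast (by omega : N + 1 ≤ k + j)
  show Pkp N k (hess φ x₀) + 1 ≤ 0
  linarith

/-- **Lemma (`funPsi`).** Let `ω ⊆ ℝ^j` be a bounded strictly convex domain, `j ≤ N`,
`C = ω × ℝ^{N-j}` and `Ψ(x) = ψ(x₁,…,x_j)`. If `N - j < k ≤ N` then `Ψ` is continuous on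
`closure C` and `𝒫ₖ⁺(D²Ψ) ≤ -1` in `C` in the viscosity sense. -/
theorem cylinder_supersolution {N j k : ℕ} (hj1 : 1 ≤ j) (hj : j ≤ N)
    (hjk : N - j < k) (hkN : k ≤ N)
    (ω : Set (EuclideanSpace ℝ (Fin j))) (hωo : IsOpen ω) (hωb : IsBounded ω)
    (hωne : ω.Nonempty) (hωsc : StrictlyConvexSet ω)
    (C : Set (Euc N))
    (hC : C = {x : Euc N | (WithLp.toLp 2 (fun i : Fin j => x (Fin.castLE hj i)) : EuclideanSpace ℝ (Fin j)) ∈ ω})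
    (Ψ : Euc N → ℝ)
    (hΨ : Ψ = fun x : Euc N => psiF ω (WithLp.toLp 2 (fun i : Fin j => x (Fin.castLE hj i)))) :
    ContinuousOn Ψ (closure C) ∧ SuperSol C (fun _ _ _ X => Pkp N k X + 1) Ψ :=
  cylinder_supersolution_general hj hjk hkN ω hωo hωb hωsc C hC Ψ hΨ
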